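/- arXiv:2302.09983 — 6 statements merged into one kernel-verified Lean document; each statement's English description precedes it below -/
import Mathlib

section
/- The set MAX of ultrafilters on ℤ that contain nℤ for every positive integer n is a two-sided ideal for the ultrafilter product: if w ∈ MAX and u is any ultrafilter on ℤ, then both u · w and w · u belong to MAX. -/
/-- The ultrafilter product: `A ∈ uprod u v` iff `{x : {y : x * y ∈ A} ∈ v} ∈ u`. -/
def uprod (u v : Ultrafilter ℤ) : Ultrafilter ℤ :=
  u.bind fun x => v.map fun y => x * y

/-- `MAX` is the set of ultrafilters on `ℤ` divisible by every positive integer. -/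
def MAX : Set (Ultrafilter ℤ) :=
  {u | ∀ n : ℕ, 1 ≤ n → {x : ℤ | (n : ℤ) ∣ x} ∈ u}

/-! An ideal `I` of `ℤ` absorbs multiplication on both sides. If `I ∈ v`, every fibre
`{y | x * y ∈ I}` contains `I`, so lies in `v`; if `I ∈ u`, the fibre over each `x ∈ I` is all
of `ℤ`. Either way `I ∈ u · v`, and `nℤ` is such an ideal. -/

theorem mem_uprod {u v : Ultrafilter ℤ} {A : Set ℤ} :
    A ∈ uprod u v ↔ {x | {y | x * y ∈ A} ∈ v} ∈ u :=
  Iff.rfl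

theorem Ideal.mem_uprod_of_mem_right (I : Ideal ℤ) (u : Ultrafilter ℤ) {v : Ultrafilter ℤ}
    (hv : (I : Set ℤ) ∈ v) : (I : Set ℤ) ∈ uprod u v :=
  mem_uprod.2 <| Filter.univ_mem' fun x =>
    Filter.mem_of_superset hv fun _ hy => I.mul_mem_left x hy

theorem Ideal.mem_uprod_of_mem_left (I : Ideal ℤ) {u : Ultrafilter ℤ} (v : Ultrafilter ℤ)
    (hu : (I : Set ℤ) ∈ u) : (I : Set ℤ) ∈ uprod u v :=
  mem_uprod.2 <| Filter.mem_of_superset hu fun _ hx =>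
    Filter.univ_mem' fun y => I.mul_mem_right y hx

theorem setOf_dvd_eq_span_singleton (n : ℤ) :
    {x : ℤ | n ∣ x} = (Ideal.span {n} : Set ℤ) := by
  ext x
  exact Ideal.mem_span_singleton.symm

theorem stmt_6 (w u : Ultrafilter ℤ) (hw : w ∈ MAX) :
    uprod u w ∈ MAX ∧ uprod w u ∈ MAX := by
  simp only [MAX, Set.mem_ofPred_eq, setOf_dvd_eq_span_singleton] at hw ⊢
  exact ⟨fun n hn => (Ideal.span {(n : ℤ)}).mem_uprod_of_mem_right u (hw n hn),
    fun n hn => (Ideal.span {(n : ℤ)}).mem_uprod_of_mem_left u (hw n hn)⟩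
end

section
/- If u is a nonprincipal ultrafilter on ℤ that contains a set X ⊆ ℤ \ {0} linearly preordered by divisibility, then for every B ∈ u there exists b ∈ B with bℤ ∈ u. -/
theorem stmt_11 (u : Ultrafilter ℤ) (X : Set ℤ) (hXu : X ∈ u) (hX0 : (0 : ℤ) ∉ X)
    (hlin : ∀ x ∈ X, ∀ y ∈ X, x ∣ y ∨ y ∣ x)
    (hnp : ∀ a : ℤ, {a} ∉ u) :
    ∀ B ∈ u, ∃ b ∈ B, {x : ℤ | b ∣ x} ∈ u := by
  intro B hB
  classical
  have hS : X ∩ B ∈ u := u.toFilter.inter_sets hXu hB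
  obtain ⟨x0, hx0⟩ := Ultrafilter.nonempty_of_mem hS
  have hNE : ∃ n : ℕ, ∃ x ∈ X ∩ B, x.natAbs = n := ⟨x0.natAbs, x0, hx0, rfl⟩
  obtain ⟨b, hbS, hbn⟩ := Nat.find_spec hNE
  refine ⟨b, hbS.2, ?_⟩
  have hb0 : b ≠ 0 := fun h => hX0 (h ▸ hbS.1)
  have hsub : X ∩ B ⊆ {x : ℤ | b ∣ x} := by
    intro y hy
    rcases hlin b hbS.1 y hy.1 with h | h
    · exact h
    · have hy0 : y ≠ 0 := fun h => hX0 (h ▸ hy.1)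
      have h1 : y.natAbs ≤ b.natAbs :=
        Nat.le_of_dvd (Int.natAbs_pos.mpr hb0) (Int.natAbs_dvd_natAbs.mpr h)
      have h2 : Nat.find hNE ≤ y.natAbs := Nat.find_min' hNE ⟨y, hy, rfl⟩
      have heq : y.natAbs = b.natAbs := le_antisymm h1 (hbn ▸ h2)
      rcases Int.natAbs_eq_natAbs_iff.mp heq with h3 | h3
      · exact ⟨1, by simp [h3]⟩
      · exact ⟨-1, by simp [h3]⟩
  exact u.toFilter.mem_of_superset hS hsub
end

section
/- Let w be an ultrafilter on ℤ such that the set P₀ = {p prime : there exists k ≥ 0 with p^(k+1)ℤ ∉ w} is finite, with witness exponent φ(p) = max{k : p^kℤ ∈ w} for p ∈ P₀. Then w is self-divisible, i.e., D(w) = {n : nℤ ∈ w} belongs to w. -/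
/-! A nonzero `n` divides `y` as soon as every prime power `p ^ vₚ(n)` does, so `n ∈ D w` once
all these prime powers lie in `D w`. For each of the finitely many primes `p` whose powers
eventually leave `D w`, let `pᵏ` be the largest power in `D w`. If `{0} ∉ w`, then `w`-almost
every `x` is nonzero and divisible by no such `pᵏ⁺¹`, so each `p ^ vₚ(x)` divides a power of `p`
lying in `D w`, whence `x ∈ D w`. If `{0} ∈ w`, then `0 ∈ D w` already. -/

/-- `D u` is the set of integers dividing the ultrafilter `u`. -/
def D (u : Ultrafilter ℤ) : Set ℤ := {n : ℤ | {x : ℤ | n ∣ x} ∈ u}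

theorem Int.dvd_of_forall_prime_pow_factorization_dvd {n y : ℤ} (hn : n ≠ 0)
    (h : ∀ p : ℕ, p.Prime → (p : ℤ) ^ n.natAbs.factorization p ∣ y) : n ∣ y := by
  rw [← Int.natAbs_dvd_natAbs, Nat.dvd_iff_prime_pow_dvd_dvd]
  intro p k hp hpk
  have hk : k ≤ n.natAbs.factorization p :=
    (hp.pow_dvd_iff_le_factorization (Int.natAbs_ne_zero.2 hn)).1 hpk
  exact Int.natCast_dvd.1 (by push_cast; exact (pow_dvd_pow _ hk).trans (h p hp))

theorem Int.pow_factorization_natAbs_dvd (x : ℤ) (p : ℕ) :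
    (p : ℤ) ^ x.natAbs.factorization p ∣ x :=
  Int.natCast_dvd.2 (by exact_mod_cast Nat.ordProj_dvd _ _)

section D

variable {u : Ultrafilter ℤ}

theorem one_mem_D : (1 : ℤ) ∈ D u :=
  Filter.mem_of_superset Filter.univ_mem fun x _ => one_dvd x

theorem zero_mem_D_iff : (0 : ℤ) ∈ D u ↔ ({0} : Set ℤ) ∈ u := by
  simp [D, zero_dvd_iff]

theorem mem_D_of_dvd {a b : ℤ} (hab : a ∣ b) (hb : b ∈ D u) : a ∈ D u :=
  Filter.mem_of_superset hb fun _ hy => hab.trans hy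

theorem mem_D_of_forall_prime_pow_mem {n : ℤ} (hn : n ≠ 0)
    (h : ∀ p : ℕ, p.Prime → (p : ℤ) ^ n.natAbs.factorization p ∈ D u) : n ∈ D u := by
  have hT : (⋂ p ∈ n.natAbs.primeFactors, {y : ℤ | (p : ℤ) ^ n.natAbs.factorization p ∣ y}) ∈ u :=
    (Filter.biInter_finset_mem _).2 fun p hp => h p (Nat.prime_of_mem_primeFactors hp)
  refine Filter.mem_of_superset hT fun y hy => Int.dvd_of_forall_prime_pow_factorization_dvd hn
    fun p _ => ?_
  by_cases hpn : p ∈ n.natAbs.primeFactors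
  · exact Set.mem_iInter₂.1 hy p hpn
  · rw [← Nat.support_factorization, Finsupp.notMem_support_iff] at hpn
    simp [hpn]

theorem exists_pow_mem_D_pow_succ_notMem {p : ℤ} (h : ∃ k : ℕ, p ^ (k + 1) ∉ D u) :
    ∃ k : ℕ, p ^ k ∈ D u ∧ p ^ (k + 1) ∉ D u := by
  by_contra! hsucc
  obtain ⟨k, hk⟩ := h
  exact hk (Nat.rec (by simpa using one_mem_D) hsucc (k + 1))

end D

theorem stmt_12 (w : Ultrafilter ℤ)
    (hfin : {p : ℤ | Prime p ∧ ∃ k : ℕ, {x : ℤ | p ^ (k + 1) ∣ x} ∉ w}.Finite) :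
    D w ∈ w := by
  by_cases h0 : ({0} : Set ℤ) ∈ w
  · exact Filter.mem_of_superset h0 (Set.singleton_subset_iff.2 (zero_mem_D_iff.2 h0))
  set P := hfin.toFinset
  have hmax : ∀ p ∈ P, ∃ k : ℕ, p ^ k ∈ D w ∧ p ^ (k + 1) ∉ D w := fun p hp =>
    exists_pow_mem_D_pow_succ_notMem (hfin.mem_toFinset.1 hp).2
  choose! k hk using hmax
  have hS : (⋂ p ∈ P, {x : ℤ | ¬p ^ (k p + 1) ∣ x}) ∩ {0}ᶜ ∈ w :=
    Filter.inter_mem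
      ((Filter.biInter_finset_mem P).2 fun p hp => Ultrafilter.compl_mem_iff_notMem.2 (hk p hp).2)
      (Ultrafilter.compl_mem_iff_notMem.2 h0)
  refine Filter.mem_of_superset hS ?_
  rintro x ⟨hxS, hx0 : x ≠ 0⟩
  refine mem_D_of_forall_prime_pow_mem hx0 fun p hp => ?_
  by_cases hpP : (p : ℤ) ∈ P
  · have hle : x.natAbs.factorization p ≤ k p := by
      by_contra! hlt
      exact Set.mem_iInter₂.1 hxS p hpP
        ((pow_dvd_pow _ hlt).trans (Int.pow_factorization_natAbs_dvd x p))
    exact mem_D_of_dvd (pow_dvd_pow _ hle) (hk p hpP).1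
  · have hall : ∀ j : ℕ, (p : ℤ) ^ (j + 1) ∈ D w := by
      simpa [P, D, Nat.prime_iff_prime_int.1 hp] using hpP
    exact mem_D_of_dvd (pow_dvd_pow _ (Nat.le_succ _)) (hall _)
end

section
/- Define, for ultrafilters u, v on ℤ: u ∣ˢ v iff D(v) = {n : nℤ ∈ v} belongs to u. Then ∣ˢ is transitive: if u ∣ˢ v and v ∣ˢ t then u ∣ˢ t. Moreover, u ∣ˢ u holds if and only if u is self-divisible. -/
/-- Strong divisibility of ultrafilters: `u ∣ˢ v` iff `D v ∈ u`. -/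
def SDvd (u v : Ultrafilter ℤ) : Prop := D v ∈ u

/-- An ultrafilter `w` is self-divisible iff `D w ∈ w`. -/
def SelfDivisible (w : Ultrafilter ℤ) : Prop := D w ∈ w

/- `D t` is closed under divisors. If `v` contains both `D t` and the multiples of `n`, some
multiple of `n` lies in `D t`, hence so does `n`; thus `v ∣ˢ t` gives `D v ⊆ D t`. -/

theorem mem_D_of_dvd_s14 {t : Ultrafilter ℤ} {m n : ℤ} (hm : m ∈ D t) (hnm : n ∣ m) : n ∈ D t :=
  Filter.mem_of_superset hm fun _ hx => hnm.trans hx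

theorem D_subset_D_of_sdvd {v t : Ultrafilter ℤ} (hvt : SDvd v t) : D v ⊆ D t := by
  intro n hn
  obtain ⟨m, hnm, hmt⟩ := Ultrafilter.nonempty_of_mem (Filter.inter_mem hn hvt)
  exact mem_D_of_dvd_s14 hmt hnm

theorem SDvd.trans {u v t : Ultrafilter ℤ} (huv : SDvd u v) (hvt : SDvd v t) : SDvd u t :=
  Filter.mem_of_superset huv (D_subset_D_of_sdvd hvt)

theorem stmt_14 :
    (∀ u v t : Ultrafilter ℤ, SDvd u v → SDvd v t → SDvd u t) ∧
    (∀ u : Ultrafilter ℤ, SDvd u u ↔ SelfDivisible u) :=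
  ⟨fun _ _ _ => SDvd.trans, fun _ => Iff.rfl⟩
end

section
/- Every group homomorphism from the profinite completion Ẑ of the integers to a finite group (with the discrete topology) is continuous. -/
open scoped Classical

/-- Each finite ring `ZMod n` gets the discrete topology. -/
instance (n : ℕ+) : TopologicalSpace (ZMod (n : ℕ)) := ⊥

/-- The profinite completion `Ẑ = lim← ℤ/nℤ`, realised as the additive subgroup of
`∏ n, ℤ/nℤ` consisting of compatible sequences of remainder classes. -/
def ZHatSubgroup : AddSubgroup ((n : ℕ+) → ZMod (n : ℕ)) where
  carrier := {f | ∀ (m n : ℕ+) (h : (m : ℕ) ∣ (n : ℕ)),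
    ZMod.castHom h (ZMod (m : ℕ)) (f n) = f m}
  add_mem' := by
    intro a b ha hb m n h
    simp [map_add, ha m n h, hb m n h]
  zero_mem' := by intro m n h; simp
  neg_mem' := by
    intro a ha m n h
    simp [map_neg, ha m n h]

/-- The profinite completion of `ℤ`, with its subspace (profinite) topology. -/
abbrev ZHat : Type := ↥ZHatSubgroup

/-!
An element of `Ẑ` whose component in `ℤ/mℤ` vanishes is divisible by `m` in `Ẑ`: dividing the
compatible representatives of its components in `ℤ/nmℤ` by `m` gives a compatible family again.
Taking `m = |G|`, which kills `G`, the kernel of the continuous projection `Ẑ → ℤ/mℤ` therefore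
lies in the kernel of `f`, so `f` is constant on the open fibres of this projection.
-/

theorem AddMonoidHom.isLocallyConstant_of_ker_le {A B G : Type*} [AddGroup A] [TopologicalSpace A]
    [AddGroup B] [TopologicalSpace B] [DiscreteTopology B] [AddGroup G]
    {φ : A →+ B} (hφ : Continuous φ) {f : A →+ G} (h : φ.ker ≤ f.ker) :
    IsLocallyConstant f := by
  refine (IsLocallyConstant.iff_eventually_eq f).2 fun x => ?_
  filter_upwards [hφ.continuousAt.preimage_mem_nhds ((isOpen_discrete {φ x}).mem_nhds rfl)]
    with y (hy : φ y = φ x)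
  have : f (y - x) = 0 := h (by simp [AddMonoidHom.mem_ker, hy])
  rwa [map_sub, sub_eq_zero] at this

instance (n : ℕ+) : DiscreteTopology (ZMod (n : ℕ)) := ⟨rfl⟩

namespace ZHat

def eval (n : ℕ+) : ZHat →+ ZMod (n : ℕ) :=
  (Pi.evalAddMonoidHom (fun k : ℕ+ => ZMod (k : ℕ)) n).comp ZHatSubgroup.subtype

theorem continuous_eval (n : ℕ+) : Continuous (eval n) :=
  (continuous_apply n).comp continuous_subtype_val

theorem val_eval_modEq (x : ZHat) {a b : ℕ+} (h : (a : ℕ) ∣ b) :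
    (eval b x).val ≡ (eval a x).val [MOD a] := by
  rw [← ZMod.natCast_eq_natCast_iff, ZMod.natCast_val, ZMod.natCast_zmod_val,
    ← ZMod.castHom_apply (h := h)]
  exact x.2 a b h

theorem exists_nsmul_eq_of_eval_eq_zero {m : ℕ+} {x : ZHat} (hx : eval m x = 0) :
    ∃ y : ZHat, (m : ℕ) • y = x := by
  set v : ℕ+ → ℕ := fun n => (eval (n * m) x).val
  have hv_dvd : ∀ n, (m : ℕ) ∣ v n := fun n => by
    have := val_eval_modEq x (a := m) (b := n * m) (by simp)
    rwa [hx, ZMod.val_zero, Nat.modEq_zero_iff_dvd] at this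
  have hv_div : ∀ n, v n / m * m = v n := fun n => Nat.div_mul_cancel (hv_dvd n)
  have hy : (fun n : ℕ+ => ((v n / m : ℕ) : ZMod (n : ℕ))) ∈ ZHatSubgroup := by
    intro a b hab
    rw [map_natCast, ZMod.natCast_eq_natCast_iff]
    refine Nat.ModEq.mul_right_cancel' m.ne_zero ?_
    rw [hv_div, hv_div]
    exact val_eval_modEq x (a := a * m) (b := b * m)
      (by simpa using Nat.mul_dvd_mul_right hab m)
  refine ⟨⟨_, hy⟩, Subtype.ext <| funext fun n => ?_⟩
  change (m : ℕ) • ((v n / m : ℕ) : ZMod (n : ℕ)) = eval n x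
  rw [nsmul_eq_mul, ← Nat.cast_mul, Nat.mul_div_cancel' (hv_dvd n),
    ← ZMod.natCast_zmod_val (eval n x), ZMod.natCast_eq_natCast_iff]
  exact val_eval_modEq x (by simp)

end ZHat

theorem stmt_17_general (G : Type) [AddGroup G] [Finite G]
    [TopologicalSpace G] (f : ZHat →+ G) :
    Continuous f := by
  let m : ℕ+ := ⟨Nat.card G, Nat.card_pos⟩
  refine (AddMonoidHom.isLocallyConstant_of_ker_le (ZHat.continuous_eval m)
    fun z hz => ?_).continuous
  obtain ⟨y, rfl⟩ := ZHat.exists_nsmul_eq_of_eval_eq_zero hz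
  exact (map_nsmul f _ y).trans card_nsmul_eq_zero'

theorem stmt_17 (G : Type) [AddGroup G] [Finite G]
    [TopologicalSpace G] [DiscreteTopology G] (f : ZHat →+ G) :
    Continuous f :=
  stmt_17_general G f
end

section
/- For every function φ : Primes → ℕ ∪ {ω}, the set H_φ = ∏_p p^{φ(p)} ℤ_p (with the convention p^ω ℤ_p = {0}) is a closed subgroup of ∏_p ℤ_p, and conversely every closed subgroup of the topological group ∏_p ℤ_p (product over all primes p of the additive p-adic integers) is of this form. -/
instance (p : Nat.Primes) : Fact (Nat.Prime (p : ℕ)) := ⟨p.2⟩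

/-!
By the Chinese remainder theorem `ℤ` is dense in `∏ₚ ℤₚ`, so a closed subgroup `H` is stable
under multiplication by the closure of `ℤ`, i.e. it is an ideal. Multiplying by the idempotents
`eₚ = Pi.single p 1` shows that `H` contains the `p`-components of its elements, hence, being
closed, `H` is the product of its projections `Hₚ`. Each `Hₚ` is compact, so closed, hence again
an ideal, now of the discrete valuation ring `ℤₚ`: it is `pⁿℤₚ` or `0`.
-/

open Filter Topology

theorem isClosed_setOf_dvd {R : Type*} [Monoid R] [TopologicalSpace R] [ContinuousMul R]
    [CompactSpace R] [T2Space R] (a : R) : IsClosed {x | a ∣ x} := by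
  have : {x | a ∣ x} = Set.range (a * ·) := by
    ext x; exact exists_congr fun _ => eq_comm
  rw [this]
  exact (isCompact_range (continuous_const_mul a)).isClosed

theorem AddSubgroup.mul_mem_of_isClosed {R : Type*} [Ring R] [TopologicalSpace R]
    [ContinuousMul R] (hR : DenseRange (Int.cast : ℤ → R)) {H : AddSubgroup R}
    (hH : IsClosed (H : Set R)) (c : R) {x : R} (hx : x ∈ H) : c * x ∈ H := by
  refine hR.induction_on c (hH.preimage (continuous_mul_const x)) fun n => ?_
  simpa [zsmul_eq_mul] using H.zsmul_mem hx n

theorem AddSubgroup.coe_eq_pi_of_isClosed {ι : Type*} {R : ι → Type*} [∀ i, Ring (R i)]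
    [∀ i, TopologicalSpace (R i)] [∀ i, ContinuousMul (R i)]
    (hR : DenseRange (Int.cast : ℤ → ∀ i, R i)) {H : AddSubgroup (∀ i, R i)}
    (hH : IsClosed (H : Set (∀ i, R i))) :
    (H : Set (∀ i, R i)) = Set.univ.pi fun i => H.map (Pi.evalAddMonoidHom R i) := by
  classical
  refine subset_antisymm (fun f hf i _ => ⟨f, hf, rfl⟩) fun f hf => ?_
  choose g hgH hg using fun i => hf i trivial
  have single_mem (i) : Pi.single i (f i) ∈ H := by
    rw [← hg i, Pi.evalAddMonoidHom_apply, ← one_mul (g i i), Pi.single_mul_left]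
    exact H.mul_mem_of_isClosed hR hH _ (hgH i)
  have hsum : HasSum (fun i => Pi.single i (f i)) f := Pi.hasSum.2 fun j => by
    convert hasSum_single j fun i hi => Pi.single_eq_of_ne' hi (f i)
    simp
  exact hH.mem_of_tendsto hsum (Eventually.of_forall fun s => H.sum_mem fun i _ => single_mem i)

namespace PadicInt

variable {p : ℕ} [Fact p.Prime]

theorem forall_pow_dvd_iff_eq_zero (x : ℤ_[p]) :
    (∀ k : ℕ, (p : ℤ_[p]) ^ k ∣ x) ↔ x = 0 := by
  refine ⟨fun h => by_contra fun hx => ?_, by rintro rfl k; exact dvd_zero _⟩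
  have := (mem_span_pow_iff_le_valuation x hx _).1
    (Ideal.mem_span_singleton.2 (h (x.valuation + 1)))
  omega

theorem nhds_hasBasis_pow_dvd_sub (x : ℤ_[p]) :
    (𝓝 x).HasBasis (fun _ => True) fun n : ℕ => {y | (p : ℤ_[p]) ^ n ∣ y - x} := by
  have hp : (1 : ℝ) < p := mod_cast (Fact.out : p.Prime).one_lt
  convert Metric.nhds_basis_closedBall_pow (x := x) (inv_pos.2 (zero_lt_one.trans hp))
    (inv_lt_one_of_one_lt₀ hp) with n
  ext y
  rw [Set.mem_ofPred_eq, Metric.mem_closedBall, dist_eq_norm, inv_pow, ← zpow_natCast,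
    ← zpow_neg, norm_le_pow_iff_mem_span_pow, Ideal.mem_span_singleton]

theorem exists_eq_setOf_pow_dvd_of_isClosed {S : AddSubgroup ℤ_[p]}
    (hS : IsClosed (S : Set ℤ_[p])) :
    ∃ φ : ℕ∞, (S : Set ℤ_[p]) = {x | ∀ k : ℕ, (k : ℕ∞) ≤ φ → (p : ℤ_[p]) ^ k ∣ x} := by
  let I : Ideal ℤ_[p] :=
    { S.toAddSubmonoid with
      smul_mem' := fun c _ hx => S.mul_mem_of_isClosed denseRange_intCast hS c hx }
  have hI : (I : Set ℤ_[p]) = S := rfl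
  rcases eq_or_ne I ⊥ with hbot | hne
  · refine ⟨⊤, ?_⟩
    ext x
    simp [← hI, hbot, forall_pow_dvd_iff_eq_zero]
  · obtain ⟨n, hn⟩ := ideal_eq_span_pow_p hne
    refine ⟨n, ?_⟩
    ext x
    rw [← hI, hn, SetLike.mem_coe, Ideal.mem_span_singleton, Set.mem_ofPred_eq]
    exact ⟨fun h k hk => (pow_dvd_pow _ (mod_cast hk)).trans h, fun h => h n le_rfl⟩

end PadicInt

theorem Nat.Primes.exists_int_forall_pow_dvd_sub {I : Set Nat.Primes} (hI : I.Finite)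
    (k : Nat.Primes → ℕ) (a : Nat.Primes → ℤ) :
    ∃ n : ℤ, ∀ p ∈ I, ((p : ℕ) : ℤ) ^ k p ∣ n - a p := by
  have := hI.to_subtype
  let J (p : I) : Ideal ℤ := Ideal.span {((p : ℕ) : ℤ) ^ k p}
  have hJ : Pairwise fun p q => IsCoprime (J p) (J q) := fun p q hpq =>
    (Ideal.isCoprime_span_singleton_iff _ _).2 <| .pow <| Nat.isCoprime_iff_coprime.2 <|
      (Nat.coprime_primes p.1.2 q.1.2).2 fun h => hpq (Subtype.ext (Subtype.ext h))
  obtain ⟨n, hn⟩ := Ideal.exists_forall_sub_mem_ideal hJ fun p => a p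
  exact ⟨n, fun p hp => Ideal.mem_span_singleton.1 (hn ⟨p, hp⟩)⟩

theorem denseRange_intCast_pi_padicInt :
    DenseRange (Int.cast : ℤ → ∀ p : Nat.Primes, ℤ_[(p : ℕ)]) := fun f => by
  have hbasis := hasBasis_pi fun p : Nat.Primes => PadicInt.nhds_hasBasis_pow_dvd_sub (f p)
  rw [← nhds_pi] at hbasis
  rw [mem_closure_iff_nhds_basis hbasis]
  rintro ⟨I, k⟩ ⟨hI, -⟩
  obtain ⟨n, hn⟩ := Nat.Primes.exists_int_forall_pow_dvd_sub hI k fun p => (f p).appr (k p)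
  refine ⟨n, ⟨n, rfl⟩, fun p hp => ?_⟩
  have happr := Ideal.mem_span_singleton.1 ((f p).appr_spec (k p))
  have hcast : ((p : ℕ) : ℤ_[(p : ℕ)]) ^ k p ∣ n - (f p).appr (k p) := by
    exact_mod_cast (Int.castRingHom ℤ_[(p : ℕ)]).map_dvd (hn p hp)
  simpa only [Set.mem_ofPred_eq, Pi.intCast_apply, sub_sub_sub_cancel_right] using
    dvd_sub hcast happr

theorem stmt_18 (H : AddSubgroup ((p : Nat.Primes) → ℤ_[(p : ℕ)])) :
    IsClosed (H : Set ((p : Nat.Primes) → ℤ_[(p : ℕ)])) ↔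
      ∃ φ : Nat.Primes → ℕ∞,
        (H : Set ((p : Nat.Primes) → ℤ_[(p : ℕ)])) =
          {f | ∀ (p : Nat.Primes) (k : ℕ), (k : ℕ∞) ≤ φ p →
            ((p : ℕ) : ℤ_[(p : ℕ)]) ^ k ∣ f p} := by
  constructor
  · intro hH
    choose φ hφ using fun p => PadicInt.exists_eq_setOf_pow_dvd_of_isClosed
      (S := H.map (Pi.evalAddMonoidHom (fun p : Nat.Primes => ℤ_[(p : ℕ)]) p))
      (hH.isCompact.image (continuous_apply p)).isClosed
    refine ⟨φ, ?_⟩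
    rw [H.coe_eq_pi_of_isClosed denseRange_intCast_pi_padicInt hH]
    ext f
    simp only [Set.mem_pi, Set.mem_univ, true_implies, hφ, Set.mem_ofPred_eq]
  · rintro ⟨φ, hφ⟩
    simp only [hφ, Set.ofPred_forall]
    exact isClosed_iInter fun p => isClosed_iInter fun k => isClosed_iInter fun _ =>
      (isClosed_setOf_dvd _).preimage (continuous_apply p)
end
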